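/- For d×d max-plus matrices M and H and all k ≥ 2, the first component of the k-th semidirect power equals (M ⊗ (I ⊕ H) ⊕ H) ⊗ (I ⊕ H)^{⊗(k-2)}. -/

import Mathlib

open Finset

abbrev Rmax : Type := WithBot ℝ

/-- Tropical (max-plus) matrix product. -/
noncomputable def trMul {l m n : ℕ} (A : Matrix (Fin l) (Fin m) Rmax) (B : Matrix (Fin m) (Fin n) Rmax) :
    Matrix (Fin l) (Fin n) Rmax :=
  fun i j => univ.sup fun k => A i k + B k j

/-- Entrywise tropical sum (max) of matrices. -/
noncomputable def trSup {m n : ℕ} (A B : Matrix (Fin m) (Fin n) Rmax) : Matrix (Fin m) (Fin n) Rmax :=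
  fun i j => A i j ⊔ B i j

/-- Tropical identity matrix. -/
noncomputable def trId (d : ℕ) : Matrix (Fin d) (Fin d) Rmax := fun i j => if i = j then 0 else ⊥

/-- Tropical matrix powers, `trPow A 0 = I`. -/
noncomputable def trPow {d : ℕ} (A : Matrix (Fin d) (Fin d) Rmax) : ℕ → Matrix (Fin d) (Fin d) Rmax
  | 0 => trId d
  | n + 1 => trMul (trPow A n) A

/-- Adjoint product `A ∘ B = A ⊕ B ⊕ (A ⊗ B)`. -/
noncomputable def adj {d : ℕ} (A B : Matrix (Fin d) (Fin d) Rmax) : Matrix (Fin d) (Fin d) Rmax :=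
  trSup (trSup A B) (trMul A B)

/-- Adjoint powers: `adjPow A n = A^{∘n}` for `n ≥ 1` (value at 0 is junk `A`). -/
noncomputable def adjPow {d : ℕ} (A : Matrix (Fin d) (Fin d) Rmax) : ℕ → Matrix (Fin d) (Fin d) Rmax
  | 0 => A
  | 1 => A
  | n + 2 => adj (adjPow A (n + 1)) A

/-- Semidirect product of pairs:
`(M,G)·(A,H) = (M ⊕ A ⊕ H ⊕ (M ⊗ H), G ∘ H)`. -/
noncomputable def sd {d : ℕ} (p q : Matrix (Fin d) (Fin d) Rmax × Matrix (Fin d) (Fin d) Rmax) :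
    Matrix (Fin d) (Fin d) Rmax × Matrix (Fin d) (Fin d) Rmax :=
  (trSup (trSup (trSup p.1 q.1) q.2) (trMul p.1 q.2), adj p.2 q.2)

/-- Semidirect powers: `sdPow p n = p^n` for `n ≥ 1` (value at 0 is junk `p`). -/
noncomputable def sdPow {d : ℕ} (p : Matrix (Fin d) (Fin d) Rmax × Matrix (Fin d) (Fin d) Rmax) :
    ℕ → Matrix (Fin d) (Fin d) Rmax × Matrix (Fin d) (Fin d) Rmax
  | 0 => p
  | 1 => p
  | n + 2 => sd (sdPow p (n + 1)) p

/-- Maximum cycle mean `λ(F)`: maximum over cycles `(c 0, c 1, …, c k, c 0)` of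
the average arc weight. -/
noncomputable def mcm {d : ℕ} (F : Matrix (Fin d) (Fin d) Rmax) : Rmax :=
  univ.sup fun kc : Σ k : Fin d, Fin (k.1 + 1) → Fin d =>
    (∑ i, F (kc.2 i) (kc.2 (i + 1))).map fun w => w / ((kc.1 : ℕ) + 1)

/-- Metric matrix `A⁺ = A ⊕ A^{⊗2} ⊕ ⋯ ⊕ A^{⊗d}`. -/
noncomputable def metric {d : ℕ} (A : Matrix (Fin d) (Fin d) Rmax) : Matrix (Fin d) (Fin d) Rmax :=
  fun i j => (Finset.Icc 1 d).sup fun k => trPow A k i j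

/-- Kleene star `A* = I ⊕ A ⊕ ⋯ ⊕ A^{⊗(d-1)}`. -/
noncomputable def kstar {d : ℕ} (A : Matrix (Fin d) (Fin d) Rmax) : Matrix (Fin d) (Fin d) Rmax :=
  fun i j => (Finset.range d).sup fun k => trPow A k i j

/-- `F` is irreducible: its weighted digraph is strongly connected. -/
def TrIrreducible {d : ℕ} (F : Matrix (Fin d) (Fin d) Rmax) : Prop :=
  ∀ i j : Fin d, Relation.ReflTransGen (fun a b => F a b ≠ ⊥) i j

/-! Write `N = I ⊕ H` and `F_k` for the first component of the `k`-th semidirect power, so that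
`F_{k+1} = F_k ⊕ M ⊕ H ⊕ F_k ⊗ H` and `F_2 = M ⊗ N ⊕ H`. Since `N^{⊗n}` has nonnegative
diagonal, `F_k ≥ F_2 ≥ M, H` for `k ≥ 2`, so `M` and `H` drop out of the recursion, which
becomes `F_{k+1} = F_k ⊕ F_k ⊗ H = F_k ⊗ N`. -/

section TropicalMatrix

variable {l m n : ℕ}

lemma Rmax.finsetSup_add {ι : Type*} (s : Finset ι) (f : ι → Rmax) (c : Rmax) :
    s.sup f + c = s.sup fun k => f k + c :=
  apply_sup_eq_sup_comp (· + c) (fun x y => (max_add_add_right x y c).symm) (WithBot.bot_add c)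

lemma Rmax.add_finsetSup {ι : Type*} (s : Finset ι) (f : ι → Rmax) (c : Rmax) :
    c + s.sup f = s.sup fun k => c + f k :=
  apply_sup_eq_sup_comp (c + ·) (fun x y => (max_add_add_left c x y).symm) (WithBot.add_bot c)

lemma trSup_of_le_left {A B : Matrix (Fin m) (Fin n) Rmax} (h : ∀ i j, B i j ≤ A i j) :
    trSup A B = A :=
  funext fun i => funext fun j => sup_of_le_left (h i j)

lemma trMul_trSup (A : Matrix (Fin l) (Fin m) Rmax) (B C : Matrix (Fin m) (Fin n) Rmax) :
    trMul A (trSup B C) = trSup (trMul A B) (trMul A C) := by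
  funext i j
  simp only [trMul, trSup, ← Finset.sup_sup, ← max_add_add_left]
  rfl

lemma trMul_assoc {p : ℕ} (A : Matrix (Fin l) (Fin m) Rmax) (B : Matrix (Fin m) (Fin n) Rmax)
    (C : Matrix (Fin n) (Fin p) Rmax) : trMul (trMul A B) C = trMul A (trMul B C) := by
  funext i j
  calc (univ.sup fun k => (univ.sup fun r => A i r + B r k) + C k j)
      = univ.sup fun k => univ.sup fun r => A i r + B r k + C k j := by
        simp only [Rmax.finsetSup_add]
    _ = univ.sup fun r => univ.sup fun k => A i r + B r k + C k j := Finset.sup_comm _ _ _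
    _ = univ.sup fun r => A i r + univ.sup fun k => B r k + C k j := by
        simp only [Rmax.add_finsetSup, add_assoc]

lemma le_trMul_of_diag_nonneg (A : Matrix (Fin m) (Fin n) Rmax) {P : Matrix (Fin n) (Fin n) Rmax}
    (hP : ∀ j, 0 ≤ P j j) (i : Fin m) (j : Fin n) : A i j ≤ trMul A P i j :=
  calc A i j = A i j + 0 := (add_zero _).symm
    _ ≤ A i j + P j j := add_le_add_right (hP j) _
    _ ≤ trMul A P i j := Finset.le_sup (f := fun k => A i k + P k j) (Finset.mem_univ j)

lemma trMul_trId (A : Matrix (Fin m) (Fin n) Rmax) : trMul A (trId n) = A := by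
  funext i j
  refine le_antisymm (Finset.sup_le fun k _ => ?_) (le_trMul_of_diag_nonneg A (by simp [trId]) i j)
  by_cases h : k = j <;> simp [trId, h]

lemma trPow_diag_nonneg {d : ℕ} {P : Matrix (Fin d) (Fin d) Rmax} (hP : ∀ j, 0 ≤ P j j)
    (k : ℕ) (j : Fin d) : 0 ≤ trPow P k j j := by
  induction k with
  | zero => simp [trPow, trId]
  | succ k ih => exact ih.trans (le_trMul_of_diag_nonneg _ hP j j)

end TropicalMatrix

section SemidirectPower

variable {d : ℕ} (M H : Matrix (Fin d) (Fin d) Rmax)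

lemma sdPow_two_fst :
    (sdPow (M, H) 2).1 = trSup (trMul M (trSup (trId d) H)) H := by
  simp only [sdPow, sd, trMul_trSup, trMul_trId]
  funext i j
  simp only [trSup, sup_idem, sup_right_comm]

lemma sdPow_add_three_fst (n : ℕ) :
    (sdPow (M, H) (n + 3)).1 =
      trSup (trSup (trSup (sdPow (M, H) (n + 2)).1 M) H) (trMul (sdPow (M, H) (n + 2)).1 H) :=
  rfl

lemma sdPow_add_two_fst (n : ℕ) :
    (sdPow (M, H) (n + 2)).1 =
      trMul (trSup (trMul M (trSup (trId d) H)) H) (trPow (trSup (trId d) H) n) := by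
  set N := trSup (trId d) H
  set Q := trSup (trMul M N) H
  have hN : ∀ j, 0 ≤ N j j := fun j => by simp [N, trSup, trId]
  induction n with
  | zero => rw [sdPow_two_fst, trPow, trMul_trId]
  | succ n ih =>
    set F := (sdPow (M, H) (n + 2)).1
    have hQF : ∀ i j, Q i j ≤ F i j := ih ▸ le_trMul_of_diag_nonneg Q (trPow_diag_nonneg hN n)
    have hMF : ∀ i j, M i j ≤ F i j := fun i j =>
      (le_trMul_of_diag_nonneg M hN i j).trans (le_sup_left.trans (hQF i j))
    have hHF : ∀ i j, H i j ≤ F i j := fun i j => le_sup_right.trans (hQF i j)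
    calc (sdPow (M, H) (n + 3)).1 = trSup F (trMul F H) := by
          rw [sdPow_add_three_fst, trSup_of_le_left hMF, trSup_of_le_left hHF]
      _ = trMul F N := by rw [trMul_trSup, trMul_trId]
      _ = trMul Q (trPow N (n + 1)) := by rw [ih, trMul_assoc]; rfl

end SemidirectPower

theorem sdPow_fst_eq {d : ℕ} (M H : Matrix (Fin d) (Fin d) Rmax) (k : ℕ) (hk : 2 ≤ k) :
    (sdPow (M, H) k).1 =
      trMul (trSup (trMul M (trSup (trId d) H)) H) (trPow (trSup (trId d) H) (k - 2)) := by
  obtain ⟨n, rfl⟩ := Nat.exists_eq_add_of_le' hk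
  exact sdPow_add_two_fst M H n
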